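/- arXiv:1611.06280 — 3 statements merged into one kernel-verified Lean document; each statement's English description precedes it below -/
import Mathlib

section
/- Fix d ≥ 1 and multi-indices k, n ∈ ℕ₀^d, and let a, b ∈ ℝ. Then ∑_{l ∈ ℕ₀^d, l_i ≤ n_i for all i} (∏_{i=1}^d (l_i)_{k_i}) · a^{(|l|)} · b^{(|n|-|l|)} · ∏_{i=1}^d C(n_i, l_i) = a^{(|k|)} · (∏_{i=1}^d (n_i)_{k_i}) · (a+b+|k|)^{(|n|-|k|)}, where |l| := ∑_{i=1}^d l_i, |n| := ∑_{i=1}^d n_i, |k| := ∑_{i=1}^d k_i, and C(n,l) denotes the binomial coefficient. (When |k| > |n| both sides vanish by the convention that falling factorials of naturals vanish.) -/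
open Polynomial Finset

/-
Coordinatewise `(l)_k C(n, l) = (n)_k C(n - k, l - k)`, and only tuples `l ≥ k` contribute, so the
substitution `l = k + j` together with `a^{(|k| + |j|)} = a^{(|k|)} (a + |k|)^{(|j|)}` pulls out the
factor `a^{(|k|)} ∏ (nᵢ)_{kᵢ}`. What remains is the multivariate Chu–Vandermonde identity
`∑_{j ≤ m} ∏ C(mᵢ, jᵢ) x^{(|j|)} y^{(|m| - |j|)} = (x + y)^{(|m|)}` for rising factorials, with
`m = n - k`, `x = a + |k|`, `y = b`; it follows from the one-variable identity by induction on `d`,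
since the inner sum over the last `d` coordinates is again of this form with `x + j₀` and
`y + m₀ - j₀`, whose sum `x + y + m₀` does not depend on `j₀`.
-/

theorem ascPochhammer_add_eval {R : Type*} [CommSemiring R] (x : R) (m n : ℕ) :
    (ascPochhammer R (m + n)).eval x =
      (ascPochhammer R m).eval x * (ascPochhammer R n).eval (x + m) := by
  rw [← ascPochhammer_mul, eval_mul, eval_comp, eval_add, eval_X, eval_natCast]

theorem ascPochhammer_eval_add {R : Type*} [CommSemiring R] (x y : R) (n : ℕ) :
    (ascPochhammer R n).eval (x + y) = ∑ i ∈ range (n + 1),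
      (n.choose i : R) * (ascPochhammer R i).eval x * (ascPochhammer R (n - i)).eval y := by
  rw [← Nat.sum_antidiagonal_eq_sum_range_succ
    (fun i j => (n.choose i : R) * (ascPochhammer R i).eval x * (ascPochhammer R j).eval y)]
  induction n with
  | zero => simp
  | succ n ih =>
    simp only [mul_assoc]
    rw [sum_antidiagonal_choose_succ_mul (fun i j => (ascPochhammer R i).eval x *
      (ascPochhammer R j).eval y), ascPochhammer_succ_eval, ih, sum_mul, ← sum_add_distrib]
    refine sum_congr rfl fun ij hij => ?_
    rw [HasAntidiagonal.mem_antidiagonal] at hij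
    rw [Nat.choose_symm_of_eq_add hij.symm, ascPochhammer_succ_eval, ascPochhammer_succ_eval,
      ← hij]
    push_cast
    ring

theorem Fin.sum_piFinset_succ {α M : Type*} [AddCommMonoid M] {d : ℕ} (S : Fin (d + 1) → Finset α)
    (f : (Fin (d + 1) → α) → M) :
    ∑ l ∈ Fintype.piFinset S, f l =
      ∑ x ∈ S 0, ∑ t ∈ Fintype.piFinset (fun i => S i.succ), f (Fin.cons x t) := by
  rw [← sum_product']
  symm
  refine sum_nbij' (fun p => Fin.cons p.1 p.2) (fun l => (l 0, Fin.tail l)) ?_ ?_ ?_ ?_ ?_ <;>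
    simp [Fin.forall_fin_succ, Fin.tail]

-- The exponent of `y` is `∑ (nᵢ - lᵢ)` rather than `∑ nᵢ - ∑ lᵢ`, so that it splits over `Fin.cons`.
theorem ascPochhammer_eval_add_eq_sum_piFinset {R : Type*} [CommSemiring R] {d : ℕ}
    (n : Fin d → ℕ) (x y : R) :
    (ascPochhammer R (∑ i, n i)).eval (x + y) =
      ∑ l ∈ Fintype.piFinset (fun i => range (n i + 1)), (∏ i, ((n i).choose (l i) : R)) *
        (ascPochhammer R (∑ i, l i)).eval x * (ascPochhammer R (∑ i, (n i - l i))).eval y := by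
  induction d generalizing x y with
  | zero => simp
  | succ d ih =>
    rw [Fin.sum_piFinset_succ]
    simp only [Fin.sum_univ_succ, Fin.prod_univ_succ, Fin.cons_zero, Fin.cons_succ]
    rw [ascPochhammer_add_eval, ascPochhammer_eval_add x y (n 0), sum_mul]
    refine sum_congr rfl fun m hm => ?_
    have hmn : (m : R) + ↑(n 0 - m) = n 0 := by
      rw [← Nat.cast_add, Nat.add_sub_cancel' (mem_range_succ_iff.mp hm)]
    rw [← hmn, ← add_add_add_comm, ih (fun i => n i.succ), mul_sum]
    refine sum_congr rfl fun t _ => ?_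
    rw [ascPochhammer_add_eval, ascPochhammer_add_eval]
    ring

theorem Nat.add_descFactorial_mul_choose (k j n : ℕ) :
    (k + j).descFactorial k * n.choose (k + j) = n.descFactorial k * (n - k).choose j := by
  rw [descFactorial_eq_factorial_mul_choose, descFactorial_eq_factorial_mul_choose, mul_assoc,
    mul_comm ((k + j).choose k), Nat.choose_mul (Nat.le_add_right k j), Nat.add_sub_cancel_left,
    mul_assoc]

theorem prod_add_descFactorial_mul_prod_choose {ι R : Type*} [Fintype ι] [CommSemiring R]
    (k j n : ι → ℕ) :
    (∏ i, ((k i + j i).descFactorial (k i) : R)) * ∏ i, ((n i).choose (k i + j i) : R) =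
      (∏ i, ((n i).descFactorial (k i) : R)) * ∏ i, ((n i - k i).choose (j i) : R) := by
  simp only [← prod_mul_distrib, ← Nat.cast_mul, Nat.add_descFactorial_mul_choose]

theorem sum_piFinset_range_eq_sum_add {ι M : Type*} [Fintype ι] [DecidableEq ι] [AddCommMonoid M]
    {k n : ι → ℕ} (hkn : k ≤ n) {f : (ι → ℕ) → M} (hf : ∀ l, ¬ k ≤ l → f l = 0) :
    ∑ l ∈ Fintype.piFinset (fun i => range (n i + 1)), f l =
      ∑ j ∈ Fintype.piFinset (fun i => range (n i - k i + 1)), f (k + j) := by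
  have hIcc (m : ι → ℕ) : Fintype.piFinset (fun i => range (m i + 1)) = Icc 0 m := by
    simp [Pi.Icc_eq, Nat.range_succ_eq_Icc_zero]
  have hIcc' : Fintype.piFinset (fun i => range (n i - k i + 1)) = Icc 0 (n - k) := hIcc (n - k)
  have hshift := map_add_left_Icc 0 (n - k) k
  rw [add_zero, add_tsub_cancel_of_le hkn] at hshift
  rw [hIcc, hIcc', ← sum_subset (Icc_subset_Icc_left (zero_le (a := k)))
    fun l hl hlk => hf l fun h => hlk (mem_Icc.2 ⟨h, (mem_Icc.1 hl).2⟩), ← hshift, sum_map]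
  rfl

theorem stmt_4_general (d : ℕ) (k n : Fin d → ℕ) (a b : ℝ) :
    ∑ l ∈ Fintype.piFinset (fun i => Finset.range (n i + 1)),
      (∏ i, ((l i).descFactorial (k i) : ℝ)) *
        (ascPochhammer ℝ (∑ i, l i)).eval a *
        (ascPochhammer ℝ (∑ i, n i - ∑ i, l i)).eval b *
        ∏ i, ((n i).choose (l i) : ℝ) =
    (ascPochhammer ℝ (∑ i, k i)).eval a *
      (∏ i, ((n i).descFactorial (k i) : ℝ)) *
      (ascPochhammer ℝ (∑ i, n i - ∑ i, k i)).eval (a + b + (∑ i, k i)) := by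
  have hvanish (l : Fin d → ℕ) (hkl : ¬ k ≤ l) : ∏ i, ((l i).descFactorial (k i) : ℝ) = 0 := by
    obtain ⟨i, hi⟩ : ∃ i, l i < k i := by simpa [Pi.le_def] using hkl
    exact prod_eq_zero (mem_univ i) (by simp [Nat.descFactorial_eq_zero_iff_lt.mpr hi])
  by_cases hkn : k ≤ n
  swap
  · rw [hvanish n hkn, mul_zero, zero_mul]
    refine sum_eq_zero fun l hl => ?_
    have hln : l ≤ n := fun i => mem_range_succ_iff.mp (Fintype.mem_piFinset.mp hl i)
    rw [hvanish l fun hkl => hkn (hkl.trans hln), zero_mul, zero_mul, zero_mul]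
  rw [sum_piFinset_range_eq_sum_add hkn fun l hkl => by rw [hvanish l hkl]; ring,
    ← sum_tsub_distrib univ fun i _ => hkn i, add_right_comm,
    ascPochhammer_eval_add_eq_sum_piFinset (fun i => n i - k i), mul_sum]
  refine sum_congr rfl fun j hj => ?_
  have hjn (i : Fin d) : k i + j i ≤ n i :=
    (Nat.le_sub_iff_add_le' (hkn i)).mp (mem_range_succ_iff.mp (Fintype.mem_piFinset.mp hj i))
  have hsub : ∑ i, n i - ∑ i, (k i + j i) = ∑ i, (n i - k i - j i) := by
    simp only [← sum_tsub_distrib univ fun i _ => hjn i, Nat.sub_sub]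
  simp only [Pi.add_apply]
  rw [hsub, sum_add_distrib, ascPochhammer_add_eval]
  linear_combination (ascPochhammer ℝ (∑ i, k i)).eval a *
    (ascPochhammer ℝ (∑ i, j i)).eval (a + ↑(∑ i, k i)) *
    (ascPochhammer ℝ (∑ i, (n i - k i - j i))).eval b *
    prod_add_descFactorial_mul_prod_choose (R := ℝ) k j n

/-- for `d ≥ 1`, multi-indices `k, n ∈ ℕ₀^d` and real `a, b`,
`∑_{l ≤ n} (∏ᵢ (lᵢ)_{kᵢ}) a^{(|l|)} b^{(|n|-|l|)} ∏ᵢ C(nᵢ, lᵢ)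
  = a^{(|k|)} (∏ᵢ (nᵢ)_{kᵢ}) (a+b+|k|)^{(|n|-|k|)}`. -/
theorem stmt_4 (d : ℕ) (hd : 1 ≤ d) (k n : Fin d → ℕ) (a b : ℝ) :
    ∑ l ∈ Fintype.piFinset (fun i => Finset.range (n i + 1)),
      (∏ i, ((l i).descFactorial (k i) : ℝ)) *
        (ascPochhammer ℝ (∑ i, l i)).eval a *
        (ascPochhammer ℝ (∑ i, n i - ∑ i, l i)).eval b *
        ∏ i, ((n i).choose (l i) : ℝ) =
    (ascPochhammer ℝ (∑ i, k i)).eval a *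
      (∏ i, ((n i).descFactorial (k i) : ℝ)) *
      (ascPochhammer ℝ (∑ i, n i - ∑ i, k i)).eval (a + b + (∑ i, k i)) :=
  stmt_4_general d k n a b
end

section
/- Let 0 < a < 1, b > 0, K := Γ(a+b)/((2-a)·Γ(b)), t ≥ 0, and set c := (1 + K·t)^{1/(a-1)}. Then for every integer i ≥ 1, the i-th derivative at x = 0 of the function x ↦ ((1-x)^{a-1} + K·t)^{1/(a-1)} (defined for x in a neighbourhood of 0) equals -c^{2-a} · ∑_{l=1}^{i} (1/(1-a))^{(l)} · (-c^{1-a})^{l-1} · ∑_{π ∈ P(i,l)} ∏_{B ∈ π} (1-a)^{(|B|)}. Consequently the coefficient c_i(t) := -(1/i!) · (d/dx)^i|_{x=0} of the limiting block size spectrum equals (c^{2-a}/i!) · ∑_{l=1}^{i} (1/(1-a))^{(l)} · (-c^{1-a})^{l-1} · ∑_{π ∈ P(i,l)} ∏_{B ∈ π} (1-a)^{(|B|)}. -/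
/-!
Write the function as `h ∘ g` with `g x = (1 - x) ^ (a - 1) + K t` and `h y = y ^ r`,
`r = 1 / (a - 1)`. Faà di Bruno's formula expresses the `i`-th derivative of `h ∘ g` as a sum
over ordered finpartitions of `Fin i`; listing the blocks of a set partition by increasing
greatest element identifies these with set partitions. Here `g⁽ᵏ⁾(0) = (1 - a)^(k)` for `k ≥ 1`
and `h⁽ˡ⁾(y) = r (r - 1) ⋯ (r - l + 1) y ^ (r - l) = (-1)ˡ (1 / (1 - a))^(l) y ^ (r - l)`.
With `y = 1 + K t` and `c = y ^ r` one has `c ^ (1 - a) = y⁻¹`, hence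
`y ^ (r - l) = c ^ (2 - a) (c ^ (1 - a)) ^ (l - 1)`.
-/

open Polynomial Finset Real

namespace OrderedFinpartition

variable {n : ℕ} (c : OrderedFinpartition n)

def part (m : Fin c.length) : Finset (Fin n) :=
  univ.map ⟨c.emb m, (c.emb_strictMono m).injective⟩

lemma coe_part (m : Fin c.length) : (c.part m : Set (Fin n)) = Set.range (c.emb m) := by
  simp [part]

lemma card_part (m : Fin c.length) : #(c.part m) = c.partSize m := by
  simp [part]

lemma emb_mem_part (m : Fin c.length) (r : Fin (c.partSize m)) : c.emb m r ∈ c.part m :=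
  mem_map_of_mem _ (mem_univ r)

lemma mem_part_iff_index_eq {x : Fin n} {m : Fin c.length} :
    x ∈ c.part m ↔ c.index x = m := by
  constructor
  · intro hx
    obtain ⟨r, -, rfl⟩ := Finset.mem_map.1 hx
    exact congrArg Sigma.fst <|
      c.emb_injective (a₁ := ⟨_, c.invEmbedding _⟩) (a₂ := ⟨m, r⟩) (c.emb_invEmbedding _)
  · rintro rfl
    simpa using c.emb_mem_part (c.index x) (c.invEmbedding x)

lemma part_nonempty (m : Fin c.length) : (c.part m).Nonempty :=
  card_pos.1 (c.card_part m ▸ c.partSize_pos m)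

lemma part_injective : Function.Injective c.part := fun m m' h => by
  obtain ⟨x, hx⟩ := c.part_nonempty m
  exact (c.mem_part_iff_index_eq.1 hx).symm.trans (c.mem_part_iff_index_eq.1 (h ▸ hx))

lemma max'_part (m : Fin c.length) :
    (c.part m).max' (c.part_nonempty m) =
      c.emb m ⟨c.partSize m - 1, Nat.sub_one_lt_of_lt (c.partSize_pos m)⟩ := by
  refine le_antisymm (max'_le _ _ _ fun y hy => ?_) (le_max' _ _ (c.emb_mem_part m _))
  obtain ⟨r, -, rfl⟩ := Finset.mem_map.1 hy
  exact (c.emb_strictMono m).monotone (Nat.le_sub_one_of_lt r.2)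

lemma strictMono_max'_part : StrictMono fun m => (c.part m).max' (c.part_nonempty m) := by
  simpa only [max'_part] using c.parts_strictMono

def toFinpartition : Finpartition (univ : Finset (Fin n)) :=
  .ofExistsUnique (univ.image c.part) (fun _ _ => subset_univ _)
    (fun x _ => ⟨c.part (c.index x), ⟨mem_image_of_mem _ (mem_univ _),
      c.mem_part_iff_index_eq.2 rfl⟩, by
        rintro _ ⟨hB, hx⟩
        obtain ⟨m, -, rfl⟩ := mem_image.1 hB
        rw [c.mem_part_iff_index_eq.1 hx]⟩)
    fun h => by
      obtain ⟨m, -, hm⟩ := mem_image.1 h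
      exact (c.part_nonempty m).ne_empty hm

lemma parts_toFinpartition : c.toFinpartition.parts = univ.image c.part := rfl

lemma card_parts_toFinpartition : #c.toFinpartition.parts = c.length := by
  rw [parts_toFinpartition, card_image_of_injective _ c.part_injective, card_univ,
    Fintype.card_fin]

lemma part_toFinpartition (m : Fin c.length) {x : Fin n} (hx : x ∈ c.part m) :
    c.toFinpartition.part x = c.part m :=
  c.toFinpartition.part_eq_of_mem (mem_image_of_mem _ (mem_univ _)) hx

lemma eq_of_part_eq (c c' : OrderedFinpartition n) (h : c.length = c'.length)
    (hpart : ∀ m, c.part m = c'.part (Fin.cast h m)) : c = c' := by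
  revert h hpart
  obtain ⟨L, size, -, emb, emb_mono, -, -, -⟩ := c
  obtain ⟨L', size', -, emb', emb_mono', -, -, -⟩ := c'
  rintro (rfl : L = L') hpart
  simp only [Fin.cast_eq_self] at hpart
  obtain rfl : size = size' := funext fun m => by
    simpa only [card_part] using congrArg card (hpart m)
  obtain rfl : emb = emb' := funext fun m => by
    refine ((emb_mono m).range_inj (emb_mono' m)).1 ?_
    simpa only [coe_part] using congrArg (fun s : Finset (Fin n) => (s : Set (Fin n))) (hpart m)
  rfl

end OrderedFinpartition

namespace Finpartition

variable {n : ℕ} (P : Finpartition (univ : Finset (Fin n)))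

lemma part_nonempty_univ (x : Fin n) : (P.part x).Nonempty := P.part_nonempty.2 (mem_univ x)

def maxes : Finset (Fin n) := {x | (P.part x).max' (P.part_nonempty_univ x) = x}

lemma max'_mem_maxes {B : Finset (Fin n)} (hB : B ∈ P.parts) :
    B.max' (P.nonempty_of_mem_parts hB) ∈ P.maxes := by
  have h := P.part_eq_of_mem hB (B.max'_mem (P.nonempty_of_mem_parts hB))
  simp only [maxes, mem_filter, mem_univ, true_and, h]

lemma card_maxes : #P.maxes = #P.parts := by
  refine card_bij (fun x _ => P.part x) (fun x _ => P.part_mem.2 (mem_univ x)) ?_ ?_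
  · intro x hx y hy hxy
    simp only [maxes, mem_filter, mem_univ, true_and] at hx hy
    rw [← hx, ← hy]
    simp only [hxy]
  · intro B hB
    exact ⟨_, P.max'_mem_maxes hB, P.part_eq_of_mem hB (B.max'_mem _)⟩

def maxEmb : Fin #P.parts ↪o Fin n := P.maxes.orderEmbOfFin P.card_maxes

def sortedPart (m : Fin #P.parts) : Finset (Fin n) := P.part (P.maxEmb m)

lemma sortedPart_mem_parts (m : Fin #P.parts) : P.sortedPart m ∈ P.parts :=
  P.part_mem.2 (mem_univ _)

lemma sortedPart_nonempty (m : Fin #P.parts) : (P.sortedPart m).Nonempty :=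
  P.part_nonempty_univ _

lemma max'_sortedPart (m : Fin #P.parts) :
    (P.sortedPart m).max' (P.sortedPart_nonempty m) = P.maxEmb m := by
  have h := orderEmbOfFin_mem P.maxes P.card_maxes m
  simp only [maxes, mem_filter, mem_univ, true_and] at h
  exact h

lemma sortedPart_injective : Function.Injective P.sortedPart := fun m m' h =>
  P.maxEmb.injective <| by rw [← max'_sortedPart, ← max'_sortedPart]; simp only [h]

lemma exists_sortedPart_eq {B : Finset (Fin n)} (hB : B ∈ P.parts) :
    ∃ m, P.sortedPart m = B := by
  obtain ⟨m, hm⟩ : B.max' (P.nonempty_of_mem_parts hB) ∈ Set.range P.maxEmb := by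
    rw [maxEmb, range_orderEmbOfFin]; exact P.max'_mem_maxes hB
  exact ⟨m, by rw [sortedPart, hm]; exact P.part_eq_of_mem hB (B.max'_mem _)⟩

lemma card_sortedPart_pos (m : Fin #P.parts) : 0 < #(P.sortedPart m) :=
  card_pos.2 (P.sortedPart_nonempty m)

def toOrderedFinpartition : OrderedFinpartition n where
  length := #P.parts
  partSize m := #(P.sortedPart m)
  partSize_pos := P.card_sortedPart_pos
  emb m := (P.sortedPart m).orderEmbOfFin rfl
  emb_strictMono m := ((P.sortedPart m).orderEmbOfFin rfl).strictMono
  parts_strictMono m m' h := by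
    dsimp only
    rw [orderEmbOfFin_last rfl (P.card_sortedPart_pos m),
      orderEmbOfFin_last rfl (P.card_sortedPart_pos m'), max'_sortedPart, max'_sortedPart]
    exact P.maxEmb.strictMono h
  disjoint m _ m' _ h := by
    simp only [Function.onFun, range_orderEmbOfFin]
    exact disjoint_coe.2 <| P.disjoint (P.sortedPart_mem_parts m) (P.sortedPart_mem_parts m')
      (P.sortedPart_injective.ne h)
  cover x := by
    obtain ⟨m, hm⟩ := P.exists_sortedPart_eq (P.part_mem.2 (mem_univ x))
    exact ⟨m, by rw [range_orderEmbOfFin, hm]; exact P.mem_part_self.2 (mem_univ x)⟩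

lemma part_toOrderedFinpartition (m : Fin P.toOrderedFinpartition.length) :
    P.toOrderedFinpartition.part m = P.sortedPart m :=
  map_orderEmbOfFin_univ _ rfl

lemma toFinpartition_toOrderedFinpartition : P.toOrderedFinpartition.toFinpartition = P := by
  ext B
  rw [OrderedFinpartition.parts_toFinpartition, mem_image]
  constructor
  · rintro ⟨m, -, rfl⟩
    exact (P.part_toOrderedFinpartition m).symm ▸ P.sortedPart_mem_parts m
  · intro hB
    obtain ⟨m, hm⟩ := P.exists_sortedPart_eq hB
    exact ⟨m, mem_univ _, (P.part_toOrderedFinpartition m).trans hm⟩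

end Finpartition

namespace OrderedFinpartition

variable {n : ℕ} (c : OrderedFinpartition n)

lemma toOrderedFinpartition_toFinpartition : c.toFinpartition.toOrderedFinpartition = c := by
  have hlen : #c.toFinpartition.parts = c.length := c.card_parts_toFinpartition
  have hmax : ⇑c.toFinpartition.maxEmb =
      fun m => (c.part (Fin.cast hlen m)).max' (c.part_nonempty _) :=
    (orderEmbOfFin_unique _
      (fun _ => c.toFinpartition.max'_mem_maxes (mem_image_of_mem _ (mem_univ _)))
      (c.strictMono_max'_part.comp (Fin.cast_strictMono hlen))).symm
  refine eq_of_part_eq _ _ hlen fun m => ?_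
  refine (Finpartition.part_toOrderedFinpartition _ m).trans ?_
  show c.toFinpartition.part (c.toFinpartition.maxEmb m) = _
  rw [hmax]
  exact c.part_toFinpartition _ (max'_mem _ _)

def equivFinpartition : OrderedFinpartition n ≃ Finpartition (univ : Finset (Fin n)) where
  toFun := toFinpartition
  invFun := Finpartition.toOrderedFinpartition
  left_inv := toOrderedFinpartition_toFinpartition
  right_inv := Finpartition.toFinpartition_toOrderedFinpartition

lemma prod_parts_toFinpartition {M : Type*} [CommMonoid M] (w : ℕ → M) :
    ∏ B ∈ c.toFinpartition.parts, w #B = ∏ m, w (c.partSize m) := by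
  rw [parts_toFinpartition, prod_image c.part_injective.injOn]
  simp only [card_part]

theorem sum_mul_prod_eq_sum_finpartition {R : Type*} [CommSemiring R] (g w : ℕ → R) :
    ∑ c : OrderedFinpartition n, g c.length * ∏ m, w (c.partSize m) =
      ∑ P : Finpartition (univ : Finset (Fin n)), g #P.parts * ∏ B ∈ P.parts, w #B := by
  refine Fintype.sum_equiv equivFinpartition _ _ fun c => ?_
  simp only [equivFinpartition, Equiv.coe_fn_mk, card_parts_toFinpartition,
    prod_parts_toFinpartition]

end OrderedFinpartition

lemma Finpartition.sum_card_parts_mul_eq_sum_Icc {n : ℕ} (hn : 1 ≤ n) {R : Type*}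
    [CommSemiring R] (g : ℕ → R) (F : Finpartition (univ : Finset (Fin n)) → R) :
    ∑ P, g #P.parts * F P = ∑ l ∈ Icc 1 n, g l * ∑ P with #P.parts = l, F P := by
  have hmaps : ∀ P ∈ (univ : Finset (Finpartition (univ : Finset (Fin n)))),
      #P.parts ∈ Icc 1 n :=
    fun P _ => mem_Icc.2
      ⟨card_pos.2 (P.parts_nonempty (univ_nonempty_iff.2 ⟨⟨0, hn⟩⟩).ne_empty),
        (P.card_parts_le_card).trans (card_univ.trans (Fintype.card_fin n)).le⟩
  rw [← sum_fiberwise_of_maps_to hmaps]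
  refine sum_congr rfl fun l _ => ?_
  rw [mul_sum]
  exact sum_congr rfl fun P hP => by rw [(mem_filter.1 hP).2]

lemma iteratedDeriv_one_sub_rpow_add_const (q s : ℝ) {k : ℕ} (hk : 0 < k) :
    iteratedDeriv k (fun x : ℝ => (1 - x) ^ q + s) 0 = (ascPochhammer ℝ k).eval (-q) := by
  have : (fun x : ℝ => (1 - x) ^ q + s) = fun x => s + (fun y : ℝ => y ^ q) (1 - x) :=
    funext fun x => add_comm _ _
  rw [this, iteratedDeriv_const_add hk, iteratedDeriv_comp_const_sub k (fun y : ℝ => y ^ q) 1,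
    iteratedDeriv_eq_iterate]
  simp [iter_deriv_rpow_const, ascPochhammer_eval_neg_eq_descPochhammer]

theorem iteratedDeriv_one_sub_rpow_add_const_rpow (q r s : ℝ) (hs : 1 + s ≠ 0) {i : ℕ}
    (hi : 1 ≤ i) :
    iteratedDeriv i (fun x : ℝ => ((1 - x) ^ q + s) ^ r) 0 =
      ∑ l ∈ Icc 1 i, (descPochhammer ℝ l).eval r * (1 + s) ^ (r - l) *
        ∑ P : Finpartition (univ : Finset (Fin i)) with #P.parts = l,
          ∏ B ∈ P.parts, (ascPochhammer ℝ #B).eval (-q) := by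
  have hg0 : (1 - 0 : ℝ) ^ q + s = 1 + s := by simp
  have hg : ContDiffAt ℝ i (fun x : ℝ => (1 - x) ^ q + s) 0 :=
    ((contDiffAt_const.sub contDiffAt_id).rpow_const_of_ne (by simp)).add contDiffAt_const
  have hh : ContDiffAt ℝ i (fun y : ℝ => y ^ r) ((1 - 0) ^ q + s) :=
    Real.contDiffAt_rpow_const_of_ne (hg0 ▸ hs)
  rw [show (fun x : ℝ => ((1 - x) ^ q + s) ^ r) = (fun y => y ^ r) ∘ (fun x => (1 - x) ^ q + s)
    from rfl, iteratedDeriv_comp_eq_sum_orderedFinpartition (g := fun y => y ^ r)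
      (f := fun x => (1 - x) ^ q + s) hh hg le_rfl]
  refine (sum_congr rfl fun c _ => ?_).trans <|
    (OrderedFinpartition.sum_mul_prod_eq_sum_finpartition
      (fun l : ℕ => (descPochhammer ℝ l).eval r * (1 + s) ^ (r - l))
      fun k => (ascPochhammer ℝ k).eval (-q)).trans
    (Finpartition.sum_card_parts_mul_eq_sum_Icc hi
      (fun l : ℕ => (descPochhammer ℝ l).eval r * (1 + s) ^ (r - l))
      fun P => ∏ B ∈ P.parts, (ascPochhammer ℝ #B).eval (-q))
  rw [iteratedDeriv_eq_iterate, iter_deriv_rpow_const, hg0]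
  exact congrArg _ <|
    prod_congr rfl fun m _ => iteratedDeriv_one_sub_rpow_add_const q s (c.partSize_pos m)

lemma descPochhammer_eval_mul_rpow_sub {a y : ℝ} (ha : a ≠ 1) (hy : 0 < y) {l : ℕ}
    (hl : 1 ≤ l) :
    (descPochhammer ℝ l).eval (1 / (a - 1)) * y ^ (1 / (a - 1) - l) =
      -(y ^ (1 / (a - 1))) ^ (2 - a) *
        ((ascPochhammer ℝ l).eval (1 / (1 - a)) * (-(y ^ (1 / (a - 1))) ^ (1 - a)) ^ (l - 1)) := by
  have ha' : a - 1 ≠ 0 := sub_ne_zero.2 ha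
  set c := y ^ (1 / (a - 1))
  have h1 : c ^ (1 - a) = y⁻¹ := by
    rw [← rpow_mul hy.le, show 1 / (a - 1) * (1 - a) = -1 by field_simp; ring, rpow_neg_one]
  have h2 : c ^ (2 - a) = c * y⁻¹ := by
    rw [show 2 - a = 1 + (1 - a) by ring, rpow_add (rpow_pos_of_pos hy _), rpow_one, h1]
  have h3 : y ^ (1 / (a - 1) - l) = c * y⁻¹ ^ l := by
    rw [rpow_sub hy, rpow_natCast, inv_pow, div_eq_mul_inv]
  have h4 : (descPochhammer ℝ l).eval (1 / (a - 1)) =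
      (-1) ^ l * (ascPochhammer ℝ l).eval (1 / (1 - a)) := by
    rw [show 1 / (1 - a) = -(1 / (a - 1)) by rw [← neg_sub, div_neg],
      ascPochhammer_eval_neg_eq_descPochhammer, ← mul_assoc, ← mul_pow]
    simp
  obtain ⟨l, rfl⟩ : ∃ l', l = l' + 1 := ⟨l - 1, by omega⟩
  rw [h4, h3, h2, h1, Nat.add_sub_cancel]
  ring

/-- for `0 < a < 1`, `b > 0`, `K = Γ(a+b)/((2-a)Γ(b))`, `t ≥ 0`
and `c = (1+Kt)^{1/(a-1)}`, the `i`-th derivative at `x = 0` of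
`x ↦ ((1-x)^{a-1} + Kt)^{1/(a-1)}` equals
`-c^{2-a} ∑_{l=1}^i (1/(1-a))^{(l)} (-c^{1-a})^{l-1} ∑_{π∈P(i,l)} ∏_{B∈π} (1-a)^{(|B|)}`,
and hence `c_i(t) = -(1/i!)·(d/dx)^i|₀` equals
`(c^{2-a}/i!) ∑_{l=1}^i (1/(1-a))^{(l)} (-c^{1-a})^{l-1} ∑_{π∈P(i,l)} ∏_{B∈π} (1-a)^{(|B|)}`. -/
theorem stmt_17 (a b : ℝ) (ha0 : 0 < a) (ha1 : a < 1) (hb : 0 < b)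
    (K : ℝ) (hK : K = Real.Gamma (a + b) / ((2 - a) * Real.Gamma b))
    (t : ℝ) (ht : 0 ≤ t)
    (c : ℝ) (hc : c = (1 + K * t) ^ (1 / (a - 1)))
    (i : ℕ) (hi : 1 ≤ i) :
    (iteratedDeriv i (fun x : ℝ => ((1 - x) ^ (a - 1) + K * t) ^ (1 / (a - 1))) 0 =
      -c ^ (2 - a) *
        ∑ l ∈ Finset.Icc 1 i,
          (ascPochhammer ℝ l).eval (1 / (1 - a)) * (-c ^ (1 - a)) ^ (l - 1) *
            ∑ P ∈ Finset.univ.filter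
                (fun P : Finpartition (Finset.univ : Finset (Fin i)) => P.parts.card = l),
              ∏ B ∈ P.parts, (ascPochhammer ℝ B.card).eval (1 - a)) ∧
    (-(1 / ((Nat.factorial i : ℕ) : ℝ)) *
        iteratedDeriv i (fun x : ℝ => ((1 - x) ^ (a - 1) + K * t) ^ (1 / (a - 1))) 0 =
      c ^ (2 - a) / ((Nat.factorial i : ℕ) : ℝ) *
        ∑ l ∈ Finset.Icc 1 i,
          (ascPochhammer ℝ l).eval (1 / (1 - a)) * (-c ^ (1 - a)) ^ (l - 1) *
            ∑ P ∈ Finset.univ.filter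
                (fun P : Finpartition (Finset.univ : Finset (Fin i)) => P.parts.card = l),
              ∏ B ∈ P.parts, (ascPochhammer ℝ B.card).eval (1 - a)) := by
  have hKpos : 0 < K := hK ▸ div_pos (Gamma_pos_of_pos (by linarith))
    (mul_pos (by linarith) (Gamma_pos_of_pos hb))
  have hy : 0 < 1 + K * t := by nlinarith
  refine (fun hderiv => ⟨hderiv, by rw [hderiv]; ring⟩) ?_
  rw [iteratedDeriv_one_sub_rpow_add_const_rpow _ _ _ hy.ne' hi, neg_sub, mul_sum]
  refine sum_congr rfl fun l hl => ?_
  rw [hc, descPochhammer_eval_mul_rpow_sub ha1.ne hy (mem_Icc.1 hl).1]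
  ring
end

section
/- For every real number c and every integer i ≥ 1 one has ∑_{l=1}^{i} l! · (-c)^{l-1} · ∑_{π ∈ P(i,l)} ∏_{B ∈ π} (|B|)! = i! · (1-c)^{i-1}. (Equivalently, the complete Bell polynomial B_i evaluated at v_k = k!(-c)^{k-1} and w_k = k! equals i!(1-c)^{i-1}, which yields the Kingman limiting block size frequencies c_i(t) = c(t)²(1-c(t))^{i-1} in the limit a → 0.) -/
/-!
Write `L(s, l)` for the sum over partitions of `s` into `l` blocks of `∏ |B|!`. For `a ∉ s`, a
partition of `insert a s` is a partition of `s` in which `a` has been added either as a new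
singleton block or to one of the existing blocks `B`, multiplying the weight by `|B| + 1`; since
the block sizes add up to `|s|`, this gives the Lah recurrence
`L(n + 1, l + 1) = L(n, l) + (n + l + 1) L(n, l + 1)`. Hence `l! L(n, l) = n! C(n - 1, l - 1)`,
and the sum in question is `n! ∑ₖ C(n - 1, k) (-c)ᵏ = n! (1 - c)ⁿ⁻¹`.
-/

open Finset Nat

namespace Nat

def lah : ℕ → ℕ → ℕ
  | 0, 0 => 1
  | 0, _ + 1 => 0
  | _ + 1, 0 => 0
  | n + 1, k + 1 => lah n k + (n + k + 1) * lah n (k + 1)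

theorem factorial_mul_lah_succ_succ (n k : ℕ) :
    (k + 1)! * lah (n + 1) (k + 1) = (n + 1)! * n.choose k := by
  induction n generalizing k with
  | zero => cases k <;> simp [lah]
  | succ n ih =>
    cases k with
    | zero =>
      have h := ih 0
      rw [lah, factorial_succ (n + 1)]
      simp only [lah, choose_zero_right] at h ⊢
      linear_combination (n + 2) * h
    | succ j =>
      have hchoose : (j + 2) * n.choose j + (n + j + 3) * n.choose (j + 1) =
          (n + 2) * (n + 1).choose (j + 1) := by
        have h := choose_succ_right_eq n j
        rw [choose_succ_succ]
        rcases le_or_gt j n with hjn | hjn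
        · obtain ⟨d, rfl⟩ := Nat.exists_eq_add_of_le hjn
          rw [Nat.add_sub_cancel_left] at h
          linear_combination h
        · simp [choose_eq_zero_of_lt hjn, choose_eq_zero_of_lt (Nat.lt_succ_of_lt hjn)]
      have h₁ := ih j
      have h₂ := ih (j + 1)
      rw [factorial_succ (j + 1)] at h₂
      rw [lah, factorial_succ (n + 1), factorial_succ (j + 1)]
      linear_combination (j + 2) * h₁ + (n + j + 3) * h₂ + (n + 1)! * hchoose

end Nat

namespace Finpartition

variable {α : Type*} [DecidableEq α] {s : Finset α} {a : α}

lemma mem_restrict_parts {u : Finset α} (P : Finpartition s) (h : u ⊆ s) {C : Finset α} :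
    C ∈ (P.restrict h).parts ↔ C ≠ ∅ ∧ ∃ D ∈ P.parts, D ∩ u = C := by
  simp [restrict]

lemma subset_of_mem_insert_empty_parts (Q : Finpartition s) {t : Finset α}
    (ht : t ∈ insert ∅ Q.parts) : t ⊆ s := by
  rcases mem_insert.1 ht with rfl | ht
  · exact empty_subset s
  · exact Q.le ht

/-- The choice `t = ∅` adds `{a}` as a new block. -/
def insertInto (Q : Finpartition s) (ha : a ∉ s) {t : Finset α} (ht : t ∈ insert ∅ Q.parts) :
    Finpartition (insert a s) where
  parts := insert (insert a t) (Q.parts.erase t)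
  supIndep := by
    rw [supIndep_iff_pairwiseDisjoint, coe_insert]
    refine (Q.disjoint.subset (by simp)).insert fun C hC _ => ?_
    rw [mem_coe, mem_erase] at hC
    refine disjoint_insert_left.2 ⟨fun haC => ha (Q.le hC.2 haC), ?_⟩
    rcases mem_insert.1 ht with rfl | ht
    · exact disjoint_empty_left C
    · exact Q.disjoint ht hC.2 (Ne.symm hC.1)
  sup_parts := by
    have hrest : t ⊔ (Q.parts.erase t).sup id = s := by
      rcases mem_insert.1 ht with rfl | ht
      · rw [erase_eq_of_notMem Q.empty_notMem_parts, Q.sup_parts]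
        exact bot_sup_eq s
      · change id t ⊔ _ = s
        rw [← sup_insert, insert_erase ht, Q.sup_parts]
    rw [sup_insert, id, sup_eq_union, insert_union, ← sup_eq_union, hrest]
  bot_notMem := by
    rw [mem_insert, mem_erase, not_or, not_and]
    exact ⟨(insert_ne_empty a t).symm, fun _ => Q.bot_notMem⟩

section insertInto

variable (Q : Finpartition s) (ha : a ∉ s) {t : Finset α} (ht : t ∈ insert ∅ Q.parts)

lemma parts_insertInto : (Q.insertInto ha ht).parts = insert (insert a t) (Q.parts.erase t) :=
  rfl

lemma part_insertInto : (Q.insertInto ha ht).part a = insert a t :=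
  part_eq_of_mem _ (mem_insert_self _ _) (mem_insert_self a t)

lemma restrict_insertInto : (Q.insertInto ha ht).restrict (subset_insert a s) = Q := by
  have hts := Q.subset_of_mem_insert_empty_parts ht
  ext C
  rw [mem_restrict_parts, parts_insertInto]
  have hat : insert a t ∩ s = t := by rw [insert_inter_of_notMem ha, inter_eq_left.2 hts]
  simp only [mem_insert, mem_erase, exists_eq_or_imp, hat]
  constructor
  · rintro ⟨hC, rfl | ⟨D, ⟨-, hD⟩, rfl⟩⟩
    · exact (mem_insert.1 ht).resolve_left hC
    · rwa [inter_eq_left.2 (Q.le hD)]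
  · intro hC
    refine ⟨Q.ne_empty hC, or_iff_not_imp_left.2 fun htC => ⟨C, ⟨Ne.symm htC, hC⟩, ?_⟩⟩
    exact inter_eq_left.2 (Q.le hC)

lemma card_parts_insertInto :
    #(Q.insertInto ha ht).parts = #Q.parts + if t = ∅ then 1 else 0 := by
  have hnew : insert a t ∉ Q.parts.erase t := fun h =>
    ha (Q.le (mem_of_mem_erase h) (mem_insert_self a t))
  rw [parts_insertInto, card_insert_of_notMem hnew]
  rcases mem_insert.1 ht with rfl | ht
  · rw [erase_eq_of_notMem Q.empty_notMem_parts, if_pos rfl]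
  · rw [card_erase_add_one ht, if_neg (Q.ne_empty ht), add_zero]

lemma prod_factorial_card_insertInto :
    ∏ B ∈ (Q.insertInto ha ht).parts, (#B)! = (#t + 1) * ∏ B ∈ Q.parts, (#B)! := by
  have hnew : insert a t ∉ Q.parts.erase t := fun h =>
    ha (Q.le (mem_of_mem_erase h) (mem_insert_self a t))
  have hat : a ∉ t := fun hat => ha (Q.subset_of_mem_insert_empty_parts ht hat)
  rw [parts_insertInto, prod_insert hnew, card_insert_of_notMem hat, factorial_succ, mul_assoc]
  rcases mem_insert.1 ht with rfl | ht
  · rw [erase_eq_of_notMem Q.empty_notMem_parts, card_empty, factorial_zero, one_mul]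
  · rw [mul_prod_erase Q.parts (fun B => (#B)!) ht]

end insertInto

lemma subset_of_notMem_of_mem_parts {P : Finpartition (insert a s)} {D : Finset α}
    (hD : D ∈ P.parts) (haD : a ∉ D) : D ⊆ s :=
  (subset_insert_iff_of_notMem haD).1 (P.le hD)

lemma erase_part_eq_inter (ha : a ∉ s) (P : Finpartition (insert a s)) :
    (P.part a).erase a = P.part a ∩ s := by
  ext x
  rcases eq_or_ne x a with rfl | hxa
  · simp [ha]
  · rw [mem_erase, mem_inter]
    exact ⟨fun hx => ⟨hx.2, (mem_insert.1 (P.part_subset a hx.2)).resolve_left hxa⟩,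
      fun hx => ⟨hxa, hx.1⟩⟩

lemma erase_part_mem (ha : a ∉ s) (P : Finpartition (insert a s)) :
    (P.part a).erase a ∈ insert ∅ (P.restrict (subset_insert a s)).parts := by
  rw [mem_insert, or_iff_not_imp_left, mem_restrict_parts, erase_part_eq_inter ha]
  exact fun h => ⟨h, P.part a, P.part_mem.2 (mem_insert_self a s), rfl⟩

lemma insertInto_restrict (ha : a ∉ s) (P : Finpartition (insert a s)) :
    (P.restrict (subset_insert a s)).insertInto ha (erase_part_mem ha P) = P := by
  have haP : a ∈ P.part a := P.mem_part (mem_insert_self a s)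
  ext C
  rw [parts_insertInto, insert_erase haP, mem_insert, mem_erase, mem_restrict_parts]
  constructor
  · rintro (rfl | ⟨hCt, hC, D, hD, rfl⟩)
    · exact P.part_mem.2 (mem_insert_self a s)
    · by_cases haD : a ∈ D
      · rw [← P.part_eq_of_mem hD haD, ← erase_part_eq_inter ha] at hCt
        exact absurd rfl hCt
      · rwa [inter_eq_left.2 (subset_of_notMem_of_mem_parts hD haD)]
  · intro hC
    by_cases haC : a ∈ C
    · exact Or.inl (P.part_eq_of_mem hC haC).symm
    · refine Or.inr ⟨fun hCt => haC ?_, P.ne_empty hC, C, hC,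
        inter_eq_left.2 (subset_of_notMem_of_mem_parts hC haC)⟩
      obtain ⟨x, hx⟩ := P.nonempty_of_mem_parts hC
      rw [P.eq_of_mem_parts hC (P.part_mem.2 (mem_insert_self a s)) hx
        (mem_of_mem_erase (hCt ▸ hx))]
      exact haP

def insertEquiv (ha : a ∉ s) :
    (Σ Q : Finpartition s, {t // t ∈ insert ∅ Q.parts}) ≃ Finpartition (insert a s) where
  toFun x := x.1.insertInto ha x.2.2
  invFun P := ⟨P.restrict (subset_insert a s), ⟨_, erase_part_mem ha P⟩⟩
  left_inv x := Sigma.subtype_ext (restrict_insertInto x.1 ha x.2.2) <| by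
    change ((x.1.insertInto ha x.2.2).part a).erase a = x.2.1
    rw [part_insertInto,
      erase_insert fun hat => ha (x.1.subset_of_mem_insert_empty_parts x.2.2 hat)]
  right_inv := insertInto_restrict ha

def sumProdFactorialCard (s : Finset α) (l : ℕ) : ℕ :=
  ∑ P : Finpartition s with #P.parts = l, ∏ B ∈ P.parts, (#B)!

theorem sumProdFactorialCard_insert (ha : a ∉ s) (l : ℕ) :
    sumProdFactorialCard (insert a s) (l + 1) =
      sumProdFactorialCard s l + (#s + l + 1) * sumProdFactorialCard s (l + 1) := by
  have fibre (Q : Finpartition s) :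
      ∑ t : {t // t ∈ insert ∅ Q.parts}, (if #(Q.insertInto ha t.2).parts = l + 1
          then ∏ B ∈ (Q.insertInto ha t.2).parts, (#B)! else 0) =
        (if #Q.parts = l then ∏ B ∈ Q.parts, (#B)! else 0) +
          (#s + l + 1) * if #Q.parts = l + 1 then ∏ B ∈ Q.parts, (#B)! else 0 := by
    have hsum : ∑ t ∈ Q.parts, (#t + 1) = #s + #Q.parts := by
      rw [sum_add_distrib, Q.sum_card_parts, sum_const, smul_eq_mul, mul_one]
    simp only [card_parts_insertInto, prod_factorial_card_insertInto]
    rw [sum_coe_sort (insert ∅ Q.parts) fun t => if #Q.parts + (if t = ∅ then 1 else 0) = l + 1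
      then (#t + 1) * ∏ B ∈ Q.parts, (#B)! else 0, sum_insert Q.empty_notMem_parts,
      sum_congr rfl fun t ht => by rw [if_neg (Q.ne_empty ht), add_zero]]
    by_cases hl : #Q.parts = l + 1
    · simp [hl, ← sum_mul, hsum, add_assoc]
    · simp [hl]
  simp only [sumProdFactorialCard, sum_filter]
  rw [← (insertEquiv ha).sum_comp, Fintype.sum_sigma, mul_sum, ← sum_add_distrib]
  exact sum_congr rfl fun Q _ => fibre Q

theorem sumProdFactorialCard_eq_lah (s : Finset α) (l : ℕ) :
    sumProdFactorialCard s l = lah #s l := by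
  induction s using Finset.induction_on generalizing l with
  | empty =>
    have : Unique (Finpartition (∅ : Finset α)) := Finpartition.instUniqueBot
    have hparts : (default : Finpartition (∅ : Finset α)).parts = ∅ := parts_eq_empty_iff.2 rfl
    cases l <;> simp [sumProdFactorialCard, sum_filter, hparts, lah]
  | insert a s ha ih =>
    cases l with
    | zero =>
      rw [card_insert_of_notMem ha, lah, sumProdFactorialCard]
      refine sum_eq_zero fun P hP => absurd (mem_filter.1 hP).2 ?_
      rw [Finset.card_eq_zero, parts_eq_empty_iff]
      exact insert_ne_empty a s
    | succ l => rw [sumProdFactorialCard_insert ha, ih, ih, card_insert_of_notMem ha, lah]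

end Finpartition

/-- for every real `c` and integer `i ≥ 1`,
`∑_{l=1}^i l! (-c)^{l-1} ∑_{π∈P(i,l)} ∏_{B∈π} |B|! = i! (1-c)^{i-1}`. -/
theorem stmt_18 (c : ℝ) (i : ℕ) (hi : 1 ≤ i) :
    ∑ l ∈ Finset.Icc 1 i,
        ((Nat.factorial l : ℝ)) * (-c) ^ (l - 1) *
          ∑ P ∈ Finset.univ.filter
              (fun P : Finpartition (Finset.univ : Finset (Fin i)) => P.parts.card = l),
            ∏ B ∈ P.parts, (Nat.factorial B.card : ℝ) =
      (Nat.factorial i : ℝ) * (1 - c) ^ (i - 1) := by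
  obtain ⟨n, rfl⟩ : ∃ n, i = n + 1 := ⟨i - 1, by omega⟩
  have inner (l : ℕ) : ∑ P : Finpartition (univ : Finset (Fin (n + 1))) with #P.parts = l,
      ∏ B ∈ P.parts, ((#B)! : ℝ) = lah (n + 1) l := by
    have h := Finpartition.sumProdFactorialCard_eq_lah (univ : Finset (Fin (n + 1))) l
    rw [Finset.card_univ, Fintype.card_fin] at h
    exact_mod_cast h
  have term (k : ℕ) : ((k + 1)! : ℝ) * (-c) ^ k * lah (n + 1) (k + 1) =
      (n + 1)! * ((-c) ^ k * 1 ^ (n - k) * n.choose k) := by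
    have h : ((k + 1)! * lah (n + 1) (k + 1) : ℝ) = (n + 1)! * n.choose k := by
      exact_mod_cast factorial_mul_lah_succ_succ n k
    rw [one_pow, mul_one]
    linear_combination (-c) ^ k * h
  simp only [inner]
  rw [← Ico_add_one_right_eq_Icc, sum_Ico_eq_sum_range, add_tsub_cancel_right,
    add_tsub_cancel_right, sub_eq_neg_add, add_pow, mul_sum]
  refine sum_congr rfl fun k _ => ?_
  rw [add_comm 1 k, add_tsub_cancel_right, term]
end
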